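/- Let k be a positive integer and N = k(k+1). Define sequences (a_m, b_m) by a_m + b_m√N = (2k+1 + 2√N)^m for m ≥ 1. Then for all m ≥ 1, b_m is even and (2k+1)·(b_m/2) ≥ a_m, i.e., u_m = b_m/2 and v_m = (2k+1)b_m/2 - a_m are nonnegative integers. -/

import Mathlib

/-!
Inside `ℤ√N` the pair `(a, b)` is the power `u ^ m` of `u = 2k+1 + 2√N`; this is legitimate
because `N = k(k+1)` lies strictly between `k²` and `(k+1)²`, so `a + b√N ↦ (a, b)` is
well defined on `ℤ + ℤ√N ⊆ ℝ`. Multiplication by `u` preserves nonnegativity of both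
coordinates and the parity of the `√N`-coordinate, and since `(2k+1)² - 4N = 1` it satisfies
`(2k+1) (x u).im - 2 (x u).re = x.im`, which gives the inequality for `u ^ m = u ^ (m-1) u`.
-/

open Zsqrtd

namespace PellUnit

variable (k : ℕ)

def u : ℤ√(k * (k + 1) : ℤ) := ⟨2 * k + 1, 2⟩

theorem re_mul_u (x : ℤ√(k * (k + 1) : ℤ)) :
    (x * u k).re = (2 * k + 1) * x.re + 2 * (k * (k + 1)) * x.im := by
  simp only [u, re_mul]; ring

theorem im_mul_u (x : ℤ√(k * (k + 1) : ℤ)) : (x * u k).im = 2 * x.re + (2 * k + 1) * x.im := by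
  simp only [u, im_mul]; ring

theorem im_mul_u_sub_re_mul_u (x : ℤ√(k * (k + 1) : ℤ)) :
    (2 * k + 1) * (x * u k).im - 2 * (x * u k).re = x.im := by
  rw [re_mul_u, im_mul_u]; ring

theorem two_dvd_im_u_pow (n : ℕ) : 2 ∣ (u k ^ n).im := by
  induction n with
  | zero => simp
  | succ n ih =>
    rw [pow_succ, im_mul_u]
    exact dvd_add (dvd_mul_right 2 _) (ih.mul_left _)

theorem u_pow_nonneg (n : ℕ) : 0 ≤ (u k ^ n).re ∧ 0 ≤ (u k ^ n).im := by
  induction n with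
  | zero => simp
  | succ n ih =>
    obtain ⟨hre, him⟩ := ih
    rw [pow_succ, re_mul_u, im_mul_u]
    constructor <;> positivity

theorem two_mul_re_u_pow_le (n : ℕ) :
    2 * (u k ^ (n + 1)).re ≤ (2 * k + 1) * (u k ^ (n + 1)).im := by
  have := im_mul_u_sub_re_mul_u k (u k ^ n)
  rw [← pow_succ] at this
  linarith [(u_pow_nonneg k n).2]

theorem not_square (hk : 0 < k) (n : ℤ) : (k * (k + 1) : ℤ) ≠ n * n := by
  intro h
  rw [← abs_mul_abs_self] at h
  have hk' : (0 : ℤ) < k := by exact_mod_cast hk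
  rcases le_or_gt |n| k with hn | hn <;> nlinarith [abs_nonneg n]

noncomputable def sqrtN : { r : ℝ // r * r = ((k * (k + 1) : ℤ) : ℝ) } :=
  ⟨Real.sqrt (k * (k + 1)), by push_cast; exact Real.mul_self_sqrt (by positivity)⟩

theorem eq_u_pow_of_eq (hk : 0 < k) {m : ℕ} {a b : ℤ}
    (h : (a : ℝ) + (b : ℝ) * Real.sqrt (k * (k + 1) : ℝ)
        = ((2 * k + 1 : ℝ) + 2 * Real.sqrt (k * (k + 1) : ℝ)) ^ m) :
    (⟨a, b⟩ : ℤ√(k * (k + 1) : ℤ)) = u k ^ m := by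
  apply lift_injective (sqrtN k) (not_square k hk)
  rw [map_pow]
  simpa [u, sqrtN] using h

end PellUnit

open PellUnit in
/-- If `a_m + b_m √N = (2k+1 + 2√N)^m` with `m ≥ 1` and `N = k(k+1)`, then `b_m`
is even and `u_m = b_m/2`, `v_m = (2k+1) b_m/2 - a_m` are nonnegative integers,
i.e. `0 ≤ b_m` and `2 a_m ≤ (2k+1) b_m`. -/
theorem stmt_6 (k : ℕ) (hk : 0 < k) (m : ℕ) (hm : 1 ≤ m) (a b : ℤ)
    (h : (a : ℝ) + (b : ℝ) * Real.sqrt (k * (k + 1) : ℝ)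
        = ((2 * k + 1 : ℝ) + 2 * Real.sqrt (k * (k + 1) : ℝ)) ^ m) :
    2 ∣ b ∧ 0 ≤ b ∧ 2 * a ≤ (2 * k + 1) * b := by
  obtain ⟨n, rfl⟩ := Nat.exists_eq_add_of_le' hm
  have hab := eq_u_pow_of_eq k hk h
  have ha : a = (u k ^ (n + 1)).re := by rw [← hab]
  have hb : b = (u k ^ (n + 1)).im := by rw [← hab]
  subst ha hb
  exact ⟨two_dvd_im_u_pow k _, (u_pow_nonneg k _).2, two_mul_re_u_pow_le k n⟩
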